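/- For every set X ⊆ κ^ω there is an F_σ set Z ⊆ X such that for every σ ∈ κ^{<ω}, if the section X↾σ is U-large, then Z↾σ is U-large. -/
import Mathlib


universe u

namespace UMeas

variable {A : Type u}

/-- The first `n` values of an infinite sequence, as a list. -/
def seg (s : ℕ → A) (n : ℕ) : List A := List.ofFn (fun i : Fin n => s i)

/-- `T` is a `U`-branching tree: a set of finite sequences closed under initial
segments, containing the empty sequence, whose branching sets are in `U`. -/
def IsUTree (U : Ultrafilter A) (T : Set (List A)) : Prop :=
  ([] ∈ T) ∧ (∀ σ ∈ T, ∀ τ : List A, τ <+: σ → τ ∈ T) ∧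
    ∀ σ ∈ T, {a : A | σ ++ [a] ∈ T} ∈ U

/-- The set of infinite branches through `T`. -/
def branches (T : Set (List A)) : Set (ℕ → A) := {s | ∀ n, seg s n ∈ T}

/-- Concatenation `σ⌢s` of a finite sequence with an infinite sequence. -/
def app (σ : List A) (s : ℕ → A) : ℕ → A :=
  fun n => if h : n < σ.length then σ.get ⟨n, h⟩ else s (n - σ.length)

/-- The section `X↾σ = {s | σ⌢s ∈ X}`. -/
def sect (X : Set (ℕ → A)) (σ : List A) : Set (ℕ → A) := {s | app σ s ∈ X}

def ULarge (U : Ultrafilter A) (X : Set (ℕ → A)) : Prop :=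
  ∃ T, IsUTree U T ∧ branches T ⊆ X

def USmall (U : Ultrafilter A) (X : Set (ℕ → A)) : Prop :=
  ∃ T, IsUTree U T ∧ branches T ∩ X = ∅

def UDetermined (U : Ultrafilter A) (X : Set (ℕ → A)) : Prop :=
  ULarge U X ∨ USmall U X

def UNull (U : Ultrafilter A) (X : Set (ℕ → A)) : Prop :=
  ∀ σ : List A, USmall U (sect X σ)

def UMeasurable (U : Ultrafilter A) (X : Set (ℕ → A)) : Prop :=
  ∀ σ : List A, UDetermined U (sect X σ)

end UMeas


open UMeas

section Aux
variable {A : Type u} [TopologicalSpace A] [DiscreteTopology A]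

lemma app_eq_get (σ : List A) (s : ℕ → A) (i : Fin σ.length) :
    app σ s i = σ.get i := dif_pos i.2

lemma shift_app (σ : List A) (s : ℕ → A) :
    (fun n => app σ s (n + σ.length)) = s := by
  funext n
  simp [app, Nat.not_lt.2 (Nat.le_add_left _ _)]

lemma isClosed_branches (T : Set (List A)) : IsClosed (branches T) := by
  have heq : branches T = ⋂ n : ℕ,
      (fun s : ℕ → A => (fun i : Fin n => s i)) ⁻¹' {f | List.ofFn f ∈ T} := by
    ext s; simp only [branches, seg, Set.mem_iInter, Set.mem_preimage, Set.mem_setOf_eq]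
  rw [heq]
  refine isClosed_iInter fun n => ?_
  have hc : Continuous (fun s : ℕ → A => (fun i : Fin n => s i)) :=
    continuous_pi fun i => continuous_apply (i : ℕ)
  exact (isClosed_discrete {f : Fin n → A | List.ofFn f ∈ T}).preimage hc

lemma image_app_eq (σ : List A) (B : Set (ℕ → A)) :
    app σ '' B = {t | ∀ i : Fin σ.length, t i = σ.get i} ∩
      (fun t : ℕ → A => fun n => t (n + σ.length)) ⁻¹' B := by
  ext t
  constructor
  · rintro ⟨s, hs, rfl⟩
    refine ⟨fun i => app_eq_get σ s i, ?_⟩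
    simpa [shift_app] using hs
  · rintro ⟨h1, h2⟩
    refine ⟨fun n => t (n + σ.length), h2, ?_⟩
    funext n
    by_cases h : n < σ.length
    · rw [app_eq_get σ _ ⟨n, h⟩]; exact (h1 ⟨n, h⟩).symm
    · simp only [app, dif_neg h]
      congr 1
      omega

lemma isClosed_image_app (σ : List A) (B : Set (ℕ → A)) (hB : IsClosed B) :
    IsClosed (app σ '' B) := by
  rw [image_app_eq]
  refine IsClosed.inter ?_ (hB.preimage (continuous_pi fun n => continuous_apply (n + σ.length)))
  have : {t : ℕ → A | ∀ i : Fin σ.length, t i = σ.get i} =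
      ⋂ i : Fin σ.length, (fun t : ℕ → A => t i) ⁻¹' {σ.get i} := by
    ext t; simp [Set.mem_iInter]
  rw [this]
  exact isClosed_iInter fun i => (isClosed_discrete _).preimage (continuous_apply (i : ℕ))

lemma seg_eq_of_image_app {σ : List A} {B : Set (ℕ → A)} {t : ℕ → A}
    (h : t ∈ app σ '' B) : seg t σ.length = σ := by
  obtain ⟨h1, -⟩ := (image_app_eq σ B) ▸ h
  apply List.ext_get (by simp [seg])
  intro i hi1 hi2
  simp only [seg, List.get_eq_getElem, List.getElem_ofFn]
  exact h1 ⟨i, hi2⟩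

end Aux

theorem stmt6 {A : Type u} [TopologicalSpace A] [DiscreteTopology A]
    (U : Ultrafilter A) (X : Set (ℕ → A)) :
    ∃ Z : Set (ℕ → A), Z ⊆ X ∧
      (∃ F : ℕ → Set (ℕ → A), (∀ n, IsClosed (F n)) ∧ Z = ⋃ n, F n) ∧
      ∀ σ : List A, UMeas.ULarge U (UMeas.sect X σ) → UMeas.ULarge U (UMeas.sect Z σ) := by
  classical
  -- for each σ with large section, pick a witnessing tree's closed branch set, shifted by σ
  set C : List A → Set (ℕ → A) := fun σ =>
    if h : ULarge U (sect X σ) then app σ '' branches h.choose else ∅ with hC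
  have hCclosed : ∀ σ, IsClosed (C σ) := by
    intro σ
    by_cases h : ULarge U (sect X σ)
    · rw [hC]; simp only [dif_pos h]
      exact isClosed_image_app σ _ (isClosed_branches _)
    · rw [hC]; simp only [dif_neg h]; exact isClosed_empty
  have hCseg : ∀ σ, ∀ t ∈ C σ, seg t σ.length = σ := by
    intro σ t ht
    by_cases h : ULarge U (sect X σ)
    · rw [hC] at ht; simp only [dif_pos h] at ht
      exact seg_eq_of_image_app ht
    · rw [hC] at ht; simp only [dif_neg h] at ht; exact absurd ht (Set.notMem_empty t)
  have hCX : ∀ σ, C σ ⊆ X := by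
    intro σ t ht
    by_cases h : ULarge U (sect X σ)
    · rw [hC] at ht; simp only [dif_pos h] at ht
      obtain ⟨s, hs, rfl⟩ := ht
      exact h.choose_spec.2 hs
    · rw [hC] at ht; simp only [dif_neg h] at ht; exact absurd ht (Set.notMem_empty t)
  set F : ℕ → Set (ℕ → A) := fun n => ⋃ σ ∈ {σ : List A | σ.length = n}, C σ with hF
  have hFclosed : ∀ n, IsClosed (F n) := by
    intro n
    rw [← isOpen_compl_iff]
    rw [isOpen_iff_forall_mem_open]
    intro t ht
    refine ⟨{s | ∀ i : Fin n, s i = t i} ∩ (C (seg t n))ᶜ, ?_, ?_, ?_, ?_⟩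
    · rintro s ⟨hs1, hs2⟩ hsF
      rw [hF] at hsF
      simp only [Set.mem_iUnion, Set.mem_setOf_eq] at hsF
      obtain ⟨τ, hτ, hsτ⟩ := hsF
      have hst : seg s n = seg t n := by
        apply List.ext_get (by simp [seg])
        intro i hi1 hi2
        simp only [seg, List.get_eq_getElem, List.getElem_ofFn]
        exact hs1 ⟨i, by simpa [seg] using hi1⟩
      have : τ = seg t n := by
        have := hCseg τ s hsτ
        rw [hτ] at this
        rw [← this, hst]
      rw [this] at hsτ
      exact hs2 hsτ
    · refine IsOpen.inter ?_ (hCclosed _).isOpen_compl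
      have : {s : ℕ → A | ∀ i : Fin n, s i = t i} =
          ⋂ i : Fin n, (fun s : ℕ → A => s i) ⁻¹' {t i} := by
        ext s; simp [Set.mem_iInter]
      rw [this]
      exact isOpen_iInter_of_finite fun i => (isOpen_discrete _).preimage (continuous_apply (i : ℕ))
    · exact fun i => rfl
    · intro hCt
      apply ht
      rw [hF]
      simp only [Set.mem_iUnion, Set.mem_setOf_eq]
      exact ⟨seg t n, by simp [seg], hCt⟩
  refine ⟨⋃ n, F n, ?_, ⟨F, hFclosed, rfl⟩, ?_⟩
  · intro t ht
    simp only [Set.mem_iUnion, hF, Set.mem_setOf_eq] at ht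
    obtain ⟨n, σ, hσ, ht⟩ := ht
    exact hCX σ ht
  · intro σ h
    refine ⟨h.choose, h.choose_spec.1, ?_⟩
    intro s hs
    show app σ s ∈ ⋃ n, F n
    simp only [Set.mem_iUnion, hF, Set.mem_setOf_eq]
    refine ⟨σ.length, σ, rfl, ?_⟩
    rw [hC]
    simp only [dif_pos h]
    exact ⟨s, hs, rfl⟩
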